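/- For a biquadratic polynomial n(x,y) = XᵀA₀Y with X = (x²,x,1)ᵀ, Y = (y²,y,1)ᵀ, and d(x,y) = XᵀA₁Y, where A₁ is the matrix of (scaled) cofactors of A₀ with entries A₁ = [[M₃₃, 2M₃₂, M₃₁],[2M₂₃, 4M₂₂, 2M₂₁],[M₁₃, 2M₁₂, M₁₁]], M_{ij} the (i,j) minor of A₀, the identity n_x·d_x + D²_x(n·d) = 0 holds identically in x and y, where D²_x(n·d) = n_{xx}d - 2n_x d_x + n d_{xx}. -/
import Mathlib


section

variable {K : Type*} [Field K]

/-- The biquadratic `n(x,y) = Xᵀ A₀ Y` for `A₀ = [[α,β,γ],[δ,ε,ζ],[κ,lam,μ]]`,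
`X = (x²,x,1)`, `Y = (y²,y,1)`. -/
def biquadN (α β γ δ ε ζ κ lam μ x y : K) : K :=
  (α * y ^ 2 + β * y + γ) * x ^ 2 + (δ * y ^ 2 + ε * y + ζ) * x +
    (κ * y ^ 2 + lam * y + μ)

/-- The biquadratic `d(x,y) = Xᵀ A₁ Y` where
`A₁ = [[M₃₃,2M₃₂,M₃₁],[2M₂₃,4M₂₂,2M₂₁],[M₁₃,2M₁₂,M₁₁]]` is built from the minor
determinants `M_{ij}` of `A₀`. -/
def biquadD (α β γ δ ε ζ κ lam μ x y : K) : K :=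
  ((α * ε - β * δ) * y ^ 2 + 2 * (α * ζ - γ * δ) * y + (β * ζ - γ * ε)) * x ^ 2 +
    (2 * (α * lam - β * κ) * y ^ 2 + 4 * (α * μ - γ * κ) * y +
      2 * (β * μ - γ * lam)) * x +
    ((δ * lam - ε * κ) * y ^ 2 + 2 * (δ * μ - ζ * κ) * y + (ε * μ - ζ * lam))

/-- `∂ₓ n`. -/
def biquadNx (α β γ δ ε ζ κ lam μ x y : K) : K :=
  2 * (α * y ^ 2 + β * y + γ) * x + (δ * y ^ 2 + ε * y + ζ)

/-- `∂ₓ d`. -/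
def biquadDx (α β γ δ ε ζ κ lam μ x y : K) : K :=
  2 * ((α * ε - β * δ) * y ^ 2 + 2 * (α * ζ - γ * δ) * y + (β * ζ - γ * ε)) * x +
    (2 * (α * lam - β * κ) * y ^ 2 + 4 * (α * μ - γ * κ) * y + 2 * (β * μ - γ * lam))

/-- `∂ₓₓ n`. -/
def biquadNxx (α β γ δ ε ζ κ lam μ x y : K) : K :=
  2 * (α * y ^ 2 + β * y + γ)

/-- `∂ₓₓ d`. -/
def biquadDxx (α β γ δ ε ζ κ lam μ x y : K) : K :=
  2 * ((α * ε - β * δ) * y ^ 2 + 2 * (α * ζ - γ * δ) * y + (β * ζ - γ * ε))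

/-- For the scaled-cofactor choice of `A₁`, the identity
`-n_x d_x - D²ₓ(n·d) = 0`, i.e. `n_{xx} d + n d_{xx} = n_x d_x`, holds identically. -/
theorem cofactor_biquadratic_identity [CharZero K]
    (α β γ δ ε ζ κ lam μ : K) (x y : K) :
    -(biquadNx α β γ δ ε ζ κ lam μ x y * biquadDx α β γ δ ε ζ κ lam μ x y) -
      (biquadNxx α β γ δ ε ζ κ lam μ x y * biquadD α β γ δ ε ζ κ lam μ x y -
        2 * (biquadNx α β γ δ ε ζ κ lam μ x y * biquadDx α β γ δ ε ζ κ lam μ x y) +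
        biquadN α β γ δ ε ζ κ lam μ x y * biquadDxx α β γ δ ε ζ κ lam μ x y) = 0 := by
  unfold biquadN biquadD biquadNx biquadDx biquadNxx biquadDxx; ring

end
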